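/- Let [T1,T1'] be a Tamari interval of size n with interval-poset P, and let Q be an interval-poset of size n. Then Q is the interval-poset of an interval of the form [T2,T1'] with T1 ≤ T2 ≤ T1' if and only if Q contains all relations of P and every relation of Q not in P is decreasing. Symmetrically, Q is the interval-poset of an interval of the form [T1,T3] with T1 ≤ T3 ≤ T1' if and only if Q contains all relations of P and every relation of Q not in P is increasing. -/

import Mathlib

/-!
A binary tree is determined by the spans of its subtrees, and `T ≤ T'` in the Tamari order iff
every subtree of `T` ends no later than the subtree of `T'` rooted at the same label: a rotation
only lengthens one span, and conversely one can always rotate towards `T'`. Equivalently,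
`dec T ⊆ dec T'`. For a Tamari interval `[T1, T2]` the relations of `dec T1 ∪ inc T2` are then
already closed under composition, so they are all of `P_{[T1,T2]}`.

If `Q ⊇ P_{[T1,T1']}` has only decreasing new relations, the decreasing relations of `Q` are the
final forest of a tree `T2`. Then `dec T1 ⊆ dec T2`, and `dec T2 ⊆ dec T1'` because `Q` contains
`inc T1'`; so `T1 ≤ T2 ≤ T1'` and `Q = P_{[T2,T1']}`. The statement about the upper endpoint is
the mirror image of this one: mirroring trees reverses the labels and the Tamari order and
exchanges initial and final forests.
-/

/-- Planar binary trees: empty, or a node with a left and a right subtree. -/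
inductive BinTree : Type where
  | leaf : BinTree
  | node : BinTree → BinTree → BinTree
  deriving DecidableEq

namespace BinTree

/-- Size: number of internal nodes. -/
def size : BinTree → ℕ
  | leaf => 0
  | node l r => l.size + r.size + 1

/-- `sub T o a b` : in the binary-search-tree labelling of `T` shifted by `o`
(its labels are `o+1, …, o+T.size`), the node labelled `a` lies in the subtree
rooted at the node labelled `b`, i.e. `a ⊴_T b`. -/
def sub : BinTree → ℕ → ℕ → ℕ → Prop
  | leaf, _, _, _ => False
  | node l r, o, a, b =>
      (b = o + l.size + 1 ∧ o + 1 ≤ a ∧ a ≤ o + l.size + r.size + 1) ∨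
      l.sub o a b ∨ r.sub (o + l.size + 1) a b

/-- One right rotation, applied at any position of the tree. -/
inductive Rot : BinTree → BinTree → Prop
  | base (A B C : BinTree) : Rot (node (node A B) C) (node A (node B C))
  | left {l l' : BinTree} (r : BinTree) : Rot l l' → Rot (node l r) (node l' r)
  | right (l : BinTree) {r r' : BinTree} : Rot r r' → Rot (node l r) (node l r')

end BinTree

/-- Tamari order: reflexive-transitive closure of right rotation. -/
def tamariLE : BinTree → BinTree → Prop := Relation.ReflTransGen BinTree.Rot

/-- `incRel T a c` : `a` is below `c` in the initial forest `inc T`. -/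
def incRel (T : BinTree) (a c : ℕ) : Prop := a < c ∧ T.sub 0 a c

/-- `decRel T c a` : `c` is below `a` in the final forest `dec T`. -/
def decRel (T : BinTree) (c a : ℕ) : Prop := a < c ∧ T.sub 0 c a

/-- An interval-poset: a partial order on `{1, …, n}` in which, whenever
`a ⊴ c` and `a < c`, all `a < b < c` satisfy `b ⊴ c`, and whenever `c ⊴ a` and
`a < c`, all `a < b < c` satisfy `b ⊴ a`.  `rel x y` means "`x` is below `y`". -/
structure IntervalPoset : Type where
  n : ℕ
  rel : ℕ → ℕ → Prop
  supp : ∀ a b, rel a b → 1 ≤ a ∧ a ≤ n ∧ 1 ≤ b ∧ b ≤ n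
  refl : ∀ a, 1 ≤ a → a ≤ n → rel a a
  antisymm : ∀ a b, rel a b → rel b a → a = b
  trans : ∀ a b c, rel a b → rel b c → rel a c
  incCond : ∀ a b c, rel a c → a < b → b < c → rel b c
  decCond : ∀ a b c, rel c a → a < b → b < c → rel b a

/-- The partial order on `{1, …, n}` generated by a family `r` of relations. -/
def genClos (n : ℕ) (r : ℕ → ℕ → Prop) : ℕ → ℕ → Prop :=
  fun a b => (a = b ∧ 1 ≤ a ∧ a ≤ n) ∨ Relation.TransGen r a b

/-- The relation of the interval-poset `P_{[T1,T2]}` of a Tamari interval: the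
partial order on `{1, …, n}` generated by the relations of `dec T1` together
with those of `inc T2`. -/
def pairRel (n : ℕ) (T1 T2 : BinTree) : ℕ → ℕ → Prop :=
  genClos n (fun x y => decRel T1 x y ∨ incRel T2 x y)


namespace BinTree

/-- The largest label in the subtree rooted at `y`, for the labels `o+1, …, o+T.size`;
it is `y` itself when `y` is not a label. -/
def subtreeMax : BinTree → ℕ → ℕ → ℕ
  | leaf, _, y => y
  | node l r, o, y =>
      if y ≤ o + l.size then l.subtreeMax o y
      else if y = o + l.size + 1 then o + l.size + r.size + 1
      else r.subtreeMax (o + l.size + 1) y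

def subtreeMin : BinTree → ℕ → ℕ → ℕ
  | leaf, _, y => y
  | node l r, o, y =>
      if y ≤ o + l.size then l.subtreeMin o y
      else if y = o + l.size + 1 then o + 1
      else r.subtreeMin (o + l.size + 1) y

theorem subtreeMax_bounds (T : BinTree) {o y : ℕ} (h₁ : o < y) (h₂ : y ≤ o + T.size) :
    y ≤ T.subtreeMax o y ∧ T.subtreeMax o y ≤ o + T.size := by
  induction T generalizing o with
  | leaf => simp only [size] at h₂; omega
  | node l r ihl ihr =>
    simp only [subtreeMax, size] at *
    split_ifs with hl hroot
    · have := ihl h₁ hl; omega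
    · omega
    · have := ihr (o := o + l.size + 1) (by omega) (by omega); omega

theorem subtreeMin_bounds (T : BinTree) {o y : ℕ} (h₁ : o < y) (h₂ : y ≤ o + T.size) :
    o < T.subtreeMin o y ∧ T.subtreeMin o y ≤ y := by
  induction T generalizing o with
  | leaf => simp only [size] at h₂; omega
  | node l r ihl ihr =>
    simp only [subtreeMin, size] at *
    split_ifs with hl hroot
    · have := ihl h₁ hl; omega
    · omega
    · have := ihr (o := o + l.size + 1) (by omega) (by omega); omega

theorem subtreeMax_eq_self (T : BinTree) {o y : ℕ} (h : y ≤ o ∨ o + T.size < y) :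
    T.subtreeMax o y = y := by
  induction T generalizing o with
  | leaf => rfl
  | node l r ihl ihr =>
    simp only [size] at h
    simp only [subtreeMax]
    split_ifs
    · exact ihl (by omega)
    · omega
    · exact ihr (by omega)

theorem sub_iff (T : BinTree) (o x y : ℕ) :
    T.sub o x y ↔
      o < y ∧ y ≤ o + T.size ∧ T.subtreeMin o y ≤ x ∧ x ≤ T.subtreeMax o y := by
  induction T generalizing o with
  | leaf => simp only [sub, size, false_iff]; omega
  | node l r ihl ihr =>
    simp only [sub, size, subtreeMax, subtreeMin, ihl, ihr]
    split_ifs <;> omega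

theorem sub_bounds {T : BinTree} {o x y : ℕ} (h : T.sub o x y) :
    o < x ∧ x ≤ o + T.size ∧ o < y ∧ y ≤ o + T.size := by
  obtain ⟨h₁, h₂, h₃, h₄⟩ := (sub_iff T o x y).1 h
  have := T.subtreeMax_bounds h₁ h₂
  have := T.subtreeMin_bounds h₁ h₂
  omega

theorem sub_of_between {T : BinTree} {o x y z : ℕ} (h : T.sub o x z)
    (h₁ : min x z ≤ y) (h₂ : y ≤ max x z) : T.sub o y z := by
  rw [sub_iff] at h ⊢
  have := T.subtreeMax_bounds h.1 h.2.1
  have := T.subtreeMin_bounds h.1 h.2.1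
  omega

theorem sub_antisymm {T : BinTree} {o x y : ℕ} (hxy : T.sub o x y) (hyx : T.sub o y x) :
    x = y := by
  induction T generalizing o with
  | leaf => exact hxy.elim
  | node l r ihl ihr =>
    rcases hxy with ⟨rfl, -, -⟩ | hxy | hxy <;> rcases hyx with ⟨hx, -, -⟩ | hyx | hyx
    all_goals first
      | exact ihl hxy hyx
      | exact ihr hxy hyx
      | ((try have := sub_bounds hxy); (try have := sub_bounds hyx); omega)

theorem sub_trans {T : BinTree} {o x y z : ℕ} (hxy : T.sub o x y) (hyz : T.sub o y z) :
    T.sub o x z := by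
  induction T generalizing o with
  | leaf => exact hxy.elim
  | node l r ihl ihr =>
    have hx := sub_bounds (T := node l r) hxy
    simp only [size] at hx
    rcases hyz with ⟨rfl, -, -⟩ | hyz | hyz
    · exact Or.inl ⟨rfl, by omega, by omega⟩
    · have := sub_bounds hyz
      rcases hxy with ⟨rfl, -, -⟩ | hxy | hxy
      · omega
      · exact Or.inr (Or.inl (ihl hxy hyz))
      · have := sub_bounds hxy; omega
    · have := sub_bounds hyz
      rcases hxy with ⟨rfl, -, -⟩ | hxy | hxy
      · omega
      · have := sub_bounds hxy; omega
      · exact Or.inr (Or.inr (ihr hxy hyz))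

theorem sub_subtreeMax {T : BinTree} {o y : ℕ} (h₁ : o < y) (h₂ : y ≤ o + T.size) :
    T.sub o (T.subtreeMax o y) y := by
  have := T.subtreeMin_bounds h₁ h₂
  have := T.subtreeMax_bounds h₁ h₂
  rw [sub_iff]
  omega

theorem subtreeMax_le_of_sub {T : BinTree} {o y z : ℕ} (h : T.sub o y z) :
    T.subtreeMax o y ≤ T.subtreeMax o z := by
  have hy := sub_bounds h
  exact ((sub_iff _ _ _ _).1 (sub_trans (sub_subtreeMax hy.1 hy.2.1) h)).2.2.2

theorem exists_common_ancestor {T : BinTree} {o x y : ℕ} (h₁ : o < x) (h₂ : x ≤ y)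
    (h₃ : y ≤ o + T.size) : ∃ m, x ≤ m ∧ m ≤ y ∧ T.sub o x m ∧ T.sub o y m := by
  induction T generalizing o with
  | leaf => simp only [size] at h₃; omega
  | node l r ihl ihr =>
    simp only [size] at h₃
    by_cases hl : y ≤ o + l.size
    · obtain ⟨m, hm⟩ := ihl h₁ hl
      exact ⟨m, hm.1, hm.2.1, Or.inr (Or.inl hm.2.2.1), Or.inr (Or.inl hm.2.2.2)⟩
    by_cases hr : o + l.size + 1 < x
    · obtain ⟨m, hm⟩ := ihr hr (by omega)
      exact ⟨m, hm.1, hm.2.1, Or.inr (Or.inr hm.2.2.1), Or.inr (Or.inr hm.2.2.2)⟩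
    exact ⟨o + l.size + 1, by omega, by omega, Or.inl ⟨rfl, by omega, by omega⟩,
      Or.inl ⟨rfl, by omega, by omega⟩⟩

theorem sub_subtreeMax_succ {T : BinTree} {o x : ℕ} (h₁ : o < x) (h₂ : x ≤ o + T.size)
    (hx : T.subtreeMax o x < o + T.size) : T.sub o x (T.subtreeMax o x + 1) := by
  have hbd := T.subtreeMax_bounds h₁ h₂
  obtain ⟨m, hxm, hm, hx_m, hy_m⟩ :=
    exists_common_ancestor (T := T) h₁ (y := T.subtreeMax o x + 1) (by omega) (by omega)
  rcases hm.lt_or_eq with hm | rfl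
  · have hm_x : T.sub o m x :=
      sub_of_between (sub_subtreeMax h₁ h₂) (by omega) (by omega)
    obtain rfl := sub_antisymm hx_m hm_x
    have := ((sub_iff _ _ _ _).1 hy_m).2.2.2
    omega
  · exact hx_m

theorem Rot.size_eq {A B : BinTree} (h : Rot A B) : A.size = B.size := by
  induction h with
  | base => simp only [size]; omega
  | left _ _ ih => simp only [size, ih]
  | right _ _ ih => simp only [size, ih]

theorem Rot.subtreeMax_le {A B : BinTree} (h : Rot A B) (o y : ℕ) :
    A.subtreeMax o y ≤ B.subtreeMax o y := by
  induction h generalizing o with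
  | base A B C =>
    have hC : o + (A.size + B.size + 1) + 1 = o + A.size + 1 + B.size + 1 := by omega
    simp only [subtreeMax, size, hC]
    split_ifs <;> omega
  | left r h ih =>
    simp only [subtreeMax, h.size_eq]
    split_ifs
    exacts [ih o, le_rfl, le_rfl]
  | right l h ih =>
    simp only [subtreeMax, h.size_eq]
    split_ifs
    exacts [le_rfl, le_rfl, ih _]

/-- Rotating at `y` only changes the span of its left child `x`, which grows to that of `y`. -/
theorem exists_rot_subtreeMax (A : BinTree) {o y : ℕ} (h₁ : o < y) (h₂ : y ≤ o + A.size)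
    (hy : A.subtreeMin o y < y) :
    ∃ A' x, Rot A A' ∧ o < x ∧ x < y ∧ A.subtreeMin o x = A.subtreeMin o y ∧
      A.subtreeMax o x = y - 1 ∧ A'.subtreeMax o x = A.subtreeMax o y ∧
      ∀ z, z ≠ x → A'.subtreeMax o z = A.subtreeMax o z := by
  induction A generalizing o with
  | leaf => simp only [size] at h₂; omega
  | node l r ihl ihr =>
    simp only [size] at h₂
    by_cases hl : y ≤ o + l.size
    · obtain ⟨l', x, hrot, hx₁, hx₂, hmin, hmax, hmax', hother⟩ :=
        ihl h₁ hl (by simpa [subtreeMin, hl] using hy)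
      refine ⟨node l' r, x, Rot.left r hrot, hx₁, hx₂, ?_, ?_, ?_, fun z hz => ?_⟩ <;>
        simp only [subtreeMin, subtreeMax, ← hrot.size_eq]
      all_goals split_ifs <;> first | omega | exact hother z hz
    by_cases hr : o + l.size + 1 < y
    · obtain ⟨r', x, hrot, hx₁, hx₂, hmin, hmax, hmax', hother⟩ :=
        ihr (o := o + l.size + 1) hr (by omega) (by simpa [subtreeMin, hl, hr.ne'] using hy)
      refine ⟨node l r', x, Rot.right l hrot, by omega, hx₂, ?_, ?_, ?_, fun z hz => ?_⟩ <;>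
        simp only [subtreeMin, subtreeMax, ← hrot.size_eq]
      all_goals split_ifs <;> first | omega | exact hother z hz
    cases l with
    | leaf =>
      obtain rfl : y = o + 1 := by simp only [size] at hl hr; omega
      simp [subtreeMin, size] at hy
    | node l₁ l₂ =>
      have hC : o + (l₁.size + l₂.size + 1) + 1 = o + l₁.size + 1 + l₂.size + 1 := by omega
      refine ⟨node l₁ (node l₂ r), o + l₁.size + 1, Rot.base l₁ l₂ r, ?_⟩
      simp only [size] at hl hr ⊢
      refine ⟨by omega, by omega, ?_, ?_, ?_, fun z hz => ?_⟩ <;>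
        simp only [subtreeMin, subtreeMax, size, hC] <;> split_ifs <;> omega

/-- Rotate at the parent `y` of the first label `x` whose span is too small; `y` is the label
just after the span of `x`. -/
theorem exists_rot_subtreeMax_le {A B : BinTree} {o : ℕ} (hsize : A.size = B.size)
    (hle : ∀ z, A.subtreeMax o z ≤ B.subtreeMax o z)
    (hlt : ∃ z, A.subtreeMax o z < B.subtreeMax o z) :
    ∃ A' x, Rot A A' ∧ x ≤ o + A.size ∧ A.subtreeMax o x < A'.subtreeMax o x ∧
      ∀ z, A'.subtreeMax o z ≤ B.subtreeMax o z := by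
  obtain ⟨x, hxA, hx_min⟩ : ∃ x, A.subtreeMax o x < B.subtreeMax o x ∧
      ∀ z < x, ¬ A.subtreeMax o z < B.subtreeMax o z :=
    ⟨Nat.find hlt, Nat.find_spec hlt, fun _ => Nat.find_min hlt⟩
  obtain ⟨hx₁, hx₂⟩ : o < x ∧ x ≤ o + A.size := by
    by_contra hout
    rw [A.subtreeMax_eq_self (by omega), B.subtreeMax_eq_self (by omega)] at hxA
    exact lt_irrefl _ hxA
  set e := A.subtreeMax o x
  have hbA := A.subtreeMax_bounds hx₁ hx₂
  have hbB := B.subtreeMax_bounds hx₁ (hsize ▸ hx₂)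
  have hx_y : A.sub o x (e + 1) := sub_subtreeMax_succ hx₁ hx₂ (by omega)
  have hy := (sub_iff _ _ _ _).1 hx_y
  obtain ⟨A', x', hrot, hx'₁, hx'₂, hmin', hmax', hrot_x', hrot_other⟩ :=
    A.exists_rot_subtreeMax (o := o) (y := e + 1) (by omega) (by omega) (by omega)
  have hx_x' : A.sub o x x' := by rw [sub_iff]; omega
  obtain rfl : x' = x := by
    rcases lt_or_ge x' x with hlt' | hge
    · have hB_x' : B.subtreeMax o x' = e := by
        have := hx_min x' hlt'
        have := hle x'
        omega
      have hB : B.sub o x x' :=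
        sub_of_between (sub_subtreeMax (T := B) hx'₁ (by omega)) (by omega) (by omega)
      have := subtreeMax_le_of_sub hB
      omega
    · exact (sub_antisymm hx_x' (sub_of_between (sub_subtreeMax hx₁ hx₂) (by omega)
        (by omega))).symm
  have hyA := A.subtreeMax_bounds (o := o) (y := e + 1) (by omega) (by omega)
  have hyB : B.sub o (e + 1) x' :=
    sub_of_between (sub_subtreeMax hx₁ (hsize ▸ hx₂)) (by omega) (by omega)
  refine ⟨A', x', hrot, hx₂, by omega, fun z => ?_⟩
  by_cases hz : z = x'
  · subst hz
    rw [hrot_x']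
    exact (hle _).trans (subtreeMax_le_of_sub hyB)
  · rw [hrot_other z hz]
    exact hle z

/-- The root is the first label whose span is everything. -/
theorem eq_of_subtreeMax_eq {A B : BinTree} {o : ℕ} (hsize : A.size = B.size)
    (h : ∀ z, o < z → z ≤ o + A.size → A.subtreeMax o z = B.subtreeMax o z) : A = B := by
  induction A generalizing B o with
  | leaf => cases B with
    | leaf => rfl
    | node => simp [size] at hsize
  | node l r ihl ihr =>
    cases B with
    | leaf => simp [size] at hsize
    | node l' r' =>
      simp only [size] at hsize h
      have hroot : ∀ {L L' R R' : BinTree}, L.size < L'.size →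
          L.size + R.size = L'.size + R'.size →
          (node L R).subtreeMax o (o + L.size + 1) ≠
            (node L' R').subtreeMax o (o + L.size + 1) := by
        intro L L' R R' hlt hs heq
        have := L'.subtreeMax_bounds (o := o) (y := o + L.size + 1) (by omega) (by omega)
        simp only [subtreeMax] at heq
        split_ifs at heq <;> omega
      have hl : l.size = l'.size := by
        by_contra hne
        rcases Nat.lt_or_gt_of_ne hne with hlt | hlt
        · exact hroot hlt (by omega) (h _ (by omega) (by omega))
        · exact hroot hlt (by omega) (h _ (by omega) (by omega)).symm
      congr 1
      · refine ihl (o := o) hl fun z hz₁ hz₂ => ?_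
        simpa only [subtreeMax, ← hl, if_pos hz₂] using h z hz₁ (by omega)
      · refine ihr (o := o + l.size + 1) (by omega) fun z hz₁ hz₂ => ?_
        have := h z (by omega) (by omega)
        simp only [subtreeMax, ← hl] at this
        split_ifs at this <;> omega

theorem exists_spanRoot (f : ℕ → ℕ) (o m : ℕ) : ∃ z, o < z ∧ (m ≤ f z ∨ m ≤ z) :=
  ⟨max m (o + 1), by omega, Or.inr (le_max_left _ _)⟩

def spanRoot (f : ℕ → ℕ) (o m : ℕ) : ℕ :=
  Nat.find (exists_spanRoot f o m)

theorem spanRoot_spec (f : ℕ → ℕ) (o m : ℕ) :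
    o < spanRoot f o m ∧ (m ≤ f (spanRoot f o m) ∨ m ≤ spanRoot f o m) :=
  Nat.find_spec (exists_spanRoot f o m)

theorem spanRoot_le {f : ℕ → ℕ} {o m : ℕ} (h : o < m) : spanRoot f o m ≤ m :=
  Nat.find_min' (exists_spanRoot f o m) ⟨h, Or.inr le_rfl⟩

theorem lt_of_lt_spanRoot {f : ℕ → ℕ} {o m z : ℕ} (hz : o < z) (hzr : z < spanRoot f o m) :
    f z < m := by
  have := Nat.find_min (exists_spanRoot f o m) hzr
  simp only [not_and, not_or, not_le] at this
  exact (this hz).1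

/-- The tree on the labels `o+1, …, m` whose spans are given by `f`, when `f` is laminar as in
`ofSubtreeMax_spec`. -/
def ofSubtreeMax (f : ℕ → ℕ) (o m : ℕ) : BinTree :=
  if o < m then
    node (ofSubtreeMax f o (spanRoot f o m - 1)) (ofSubtreeMax f (spanRoot f o m) m)
  else leaf
termination_by m - o
decreasing_by
  all_goals have := (spanRoot_spec f o m).1; have := spanRoot_le (f := f) ‹o < m›
  all_goals omega

theorem ofSubtreeMax_spec {f : ℕ → ℕ} {o m : ℕ}
    (hf : ∀ z, o < z → z ≤ m → z ≤ f z ∧ f z ≤ m)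
    (hnest : ∀ y z, o < y → y ≤ m → y < z → z ≤ f y → f z ≤ f y) :
    (ofSubtreeMax f o m).size = m - o ∧
      ∀ z, o < z → z ≤ m → (ofSubtreeMax f o m).subtreeMax o z = f z := by
  rw [ofSubtreeMax]
  split_ifs with hom
  · obtain ⟨hr₁, hr⟩ := spanRoot_spec f o m
    have hr₂ := spanRoot_le (f := f) hom
    set r := spanRoot f o m
    have hfr : f r = m := by have := hf r hr₁ hr₂; omega
    have hleft : ∀ z, o < z → z ≤ r - 1 → f z ≤ r - 1 := fun z hz₁ hz₂ => by
      by_contra hzr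
      have := hnest z r hz₁ (by omega) (by omega) (by omega)
      have := lt_of_lt_spanRoot (f := f) (m := m) hz₁ (by omega)
      omega
    obtain ⟨hl_size, hl⟩ := ofSubtreeMax_spec (f := f) (o := o) (m := r - 1)
      (fun z hz₁ hz₂ => ⟨(hf z hz₁ (by omega)).1, hleft z hz₁ hz₂⟩)
      (fun y z hy₁ hy₂ => hnest y z hy₁ (by omega))
    obtain ⟨hr_size, hr⟩ := ofSubtreeMax_spec (f := f) (o := r) (m := m)
      (fun z hz₁ hz₂ => hf z (by omega) hz₂) (fun y z hy₁ => hnest y z (by omega))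
    have hro : o + (r - 1 - o) + 1 = r := by omega
    refine ⟨by simp only [size, hl_size, hr_size]; omega, fun z hz₁ hz₂ => ?_⟩
    simp only [subtreeMax, hl_size, hr_size, hro]
    split_ifs
    · exact hl z hz₁ (by omega)
    · obtain rfl : z = r := by omega
      omega
    · exact hr z (by omega) hz₂
  · exact ⟨by simp only [size]; omega, fun z hz₁ hz₂ => by omega⟩
termination_by m - o
decreasing_by
  all_goals omega

def mirror : BinTree → BinTree
  | leaf => leaf
  | node l r => node r.mirror l.mirror

theorem mirror_involutive : Function.Involutive mirror := by
  intro T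
  induction T with
  | leaf => rfl
  | node l r ihl ihr => simp only [mirror, ihl, ihr]

theorem size_mirror (T : BinTree) : T.mirror.size = T.size := by
  induction T with
  | leaf => rfl
  | node l r ihl ihr => simp only [mirror, size, ihl, ihr]; omega

theorem sub_mirror_iff (T : BinTree) {o o' a b a' b' : ℕ} (ha : a + a' = o + o' + T.size + 1)
    (hb : b + b' = o + o' + T.size + 1) : T.mirror.sub o a b ↔ T.sub o' a' b' := by
  induction T generalizing o o' with
  | leaf => rfl
  | node l r ihl ihr =>
    simp only [size] at ha hb
    simp only [mirror, sub, size_mirror]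
    rw [ihr (o := o) (o' := o' + l.size + 1) (by omega) (by omega),
      ihl (o := o + r.size + 1) (o' := o') (by omega) (by omega)]
    constructor <;> rintro (⟨h₁, h₂, h₃⟩ | h | h)
    all_goals first
      | exact Or.inr (Or.inl h)
      | exact Or.inr (Or.inr h)
      | exact Or.inl ⟨by omega, by omega, by omega⟩

theorem Rot.mirror {A B : BinTree} (h : Rot A B) : Rot B.mirror A.mirror := by
  induction h with
  | base A B C => exact Rot.base C.mirror B.mirror A.mirror
  | left r _ ih => exact Rot.right r.mirror ih
  | right l _ ih => exact Rot.left l.mirror ih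

end BinTree

theorem tamariLE_of_subtreeMax_le {A B : BinTree} {o : ℕ} (hsize : A.size = B.size)
    (hle : ∀ z, A.subtreeMax o z ≤ B.subtreeMax o z) : tamariLE A B := by
  induction h : ∑ z ∈ Finset.range (o + A.size + 1), (B.subtreeMax o z - A.subtreeMax o z)
    using Nat.strong_induction_on generalizing A with
  | _ k ih =>
  by_cases hlt : ∃ z, A.subtreeMax o z < B.subtreeMax o z
  · obtain ⟨A', x, hrot, hx, hgrow, hle'⟩ := BinTree.exists_rot_subtreeMax_le hsize hle hlt
    refine Relation.ReflTransGen.head hrot (ih _ ?_ (hrot.size_eq ▸ hsize) hle' rfl)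
    rw [← h, ← hrot.size_eq]
    refine Finset.sum_lt_sum (fun z _ => ?_) ⟨x, Finset.mem_range.2 (by omega), ?_⟩
    · have := hrot.subtreeMax_le o z
      omega
    · have := hle' x
      omega
  · simp only [not_exists, not_lt] at hlt
    rw [BinTree.eq_of_subtreeMax_eq hsize fun z _ _ => (hle z).antisymm (hlt z)]
    exact Relation.ReflTransGen.refl

theorem tamariLE.subtreeMax_le {A B : BinTree} (h : tamariLE A B) (o y : ℕ) :
    A.subtreeMax o y ≤ B.subtreeMax o y := by
  induction h with
  | refl => exact le_rfl
  | tail _ hrot ih => exact ih.trans (hrot.subtreeMax_le o y)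

theorem decRel_iff {A : BinTree} {c a : ℕ} :
    decRel A c a ↔ a < c ∧ 0 < a ∧ c ≤ A.subtreeMax 0 a := by
  rw [decRel, BinTree.sub_iff]
  constructor
  · rintro ⟨hac, ha, -, -, hc⟩
    exact ⟨hac, ha, hc⟩
  · rintro ⟨hac, ha, hc⟩
    have ha' : a ≤ A.size := by
      by_contra hout
      rw [A.subtreeMax_eq_self (by omega)] at hc
      omega
    have := A.subtreeMin_bounds (o := 0) ha (by omega)
    exact ⟨hac, ha, by omega, by omega, hc⟩

theorem tamariLE.decRel_le {A B : BinTree} (h : tamariLE A B) {c a : ℕ} (hca : decRel A c a) :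
    decRel B c a := by
  rw [decRel_iff] at hca ⊢
  exact ⟨hca.1, hca.2.1, hca.2.2.trans (h.subtreeMax_le 0 a)⟩

theorem tamariLE_iff_decRel {A B : BinTree} (hsize : A.size = B.size) :
    tamariLE A B ↔ ∀ c a, decRel A c a → decRel B c a := by
  refine ⟨fun h c a => h.decRel_le, fun h => tamariLE_of_subtreeMax_le (o := 0) hsize
    fun z => ?_⟩
  by_cases hz : 0 < z ∧ z ≤ A.size
  · have hA := A.subtreeMax_bounds (o := 0) hz.1 (by omega)
    have hB := B.subtreeMax_bounds (o := 0) hz.1 (by omega)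
    rcases hA.1.lt_or_eq with hlt | heq
    · exact (decRel_iff.1 (h _ _ (decRel_iff.2 ⟨hlt, hz.1, le_rfl⟩))).2.2
    · omega
  · rw [A.subtreeMax_eq_self (by omega), B.subtreeMax_eq_self (by omega)]

theorem tamariLE.mirror {A B : BinTree} (h : tamariLE A B) : tamariLE B.mirror A.mirror := by
  induction h with
  | refl => exact Relation.ReflTransGen.refl
  | tail _ hrot ih => exact Relation.ReflTransGen.head hrot.mirror ih

theorem tamariLE_mirror_iff {A B : BinTree} : tamariLE A.mirror B.mirror ↔ tamariLE B A := by
  refine ⟨fun h => ?_, tamariLE.mirror⟩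
  simpa only [BinTree.mirror_involutive _] using h.mirror

theorem decRel_trans {A : BinTree} {a b c : ℕ} (hab : decRel A a b) (hbc : decRel A b c) :
    decRel A a c :=
  ⟨hbc.1.trans hab.1, BinTree.sub_trans hab.2 hbc.2⟩

theorem incRel_trans {B : BinTree} {a b c : ℕ} (hab : incRel B a b) (hbc : incRel B b c) :
    incRel B a c :=
  ⟨hab.1.trans hbc.1, BinTree.sub_trans hab.2 hbc.2⟩

theorem tamariLE.incRel_of_decRel_of_incRel {A B : BinTree} (h : tamariLE A B) {a b c : ℕ}
    (hab : decRel A a b) (hbc : incRel B b c) : incRel B a c := by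
  obtain ⟨hba, ha_b⟩ := hab
  obtain ⟨hbc, hb_c⟩ := hbc
  have hac : a < c := by
    -- otherwise `c` lies between `b` and `a`, so `c ⊴ b` in `A`, hence in `B`
    by_contra hca
    have hc_b : decRel A c b := ⟨hbc, BinTree.sub_of_between ha_b (by omega) (by omega)⟩
    have := BinTree.sub_antisymm hb_c (h.decRel_le hc_b).2
    omega
  exact ⟨hac, BinTree.sub_of_between hb_c (by omega) (by omega)⟩

theorem tamariLE.decRel_or_incRel_of_incRel_of_decRel {A B : BinTree} (h : tamariLE A B)
    {a b c : ℕ} (hab : incRel B a b) (hbc : decRel A b c) :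
    a = c ∨ decRel A a c ∨ incRel B a c := by
  obtain ⟨hab, ha_b⟩ := hab
  have ha_c := BinTree.sub_trans ha_b (h.decRel_le hbc).2
  rcases lt_trichotomy a c with hac | rfl | hca
  · exact Or.inr (Or.inr ⟨hac, ha_c⟩)
  · exact Or.inl rfl
  · exact Or.inr (Or.inl ⟨hca, BinTree.sub_of_between hbc.2 (by omega) (by omega)⟩)

theorem tamariLE.pairRel_iff {A B : BinTree} (h : tamariLE A B) {n a b : ℕ} (hB : B.size = n) :
    pairRel n A B a b ↔ (a = b ∧ 1 ≤ a ∧ a ≤ n) ∨ decRel A a b ∨ incRel B a b := by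
  refine ⟨fun hab => ?_, fun hab => ?_⟩
  · rcases hab with hrefl | hab
    · exact Or.inl hrefl
    induction hab with
    | single hab => exact Or.inr hab
    | tail _ hbc ih =>
      rcases ih with ⟨rfl, -⟩ | hab | hab <;> rcases hbc with hbc | hbc
      · exact Or.inr (Or.inl hbc)
      · exact Or.inr (Or.inr hbc)
      · exact Or.inr (Or.inl (decRel_trans hab hbc))
      · exact Or.inr (Or.inr (h.incRel_of_decRel_of_incRel hab hbc))
      · rcases h.decRel_or_incRel_of_incRel_of_decRel hab hbc with rfl | hac
        · have := BinTree.sub_bounds hab.2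
          exact Or.inl ⟨rfl, by omega, by omega⟩
        · exact Or.inr hac
      · exact Or.inr (Or.inr (incRel_trans hab hbc))
  · rcases hab with hrefl | hab
    · exact Or.inl hrefl
    · exact Or.inr (Relation.TransGen.single hab)

namespace IntervalPoset

noncomputable def decMax (Q : IntervalPoset) (x : ℕ) : ℕ :=
  open scoped Classical in Nat.findGreatest (Q.rel · x) Q.n

variable {Q : IntervalPoset}

theorem le_decMax {x : ℕ} (h₁ : 1 ≤ x) (h₂ : x ≤ Q.n) : x ≤ Q.decMax x := by
  classical
  exact Nat.le_findGreatest h₂ (Q.refl x h₁ h₂)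

theorem decMax_le (x : ℕ) : Q.decMax x ≤ Q.n := by
  classical
  exact Nat.findGreatest_le _

theorem le_decMax_of_rel {c x : ℕ} (h : Q.rel c x) : c ≤ Q.decMax x := by
  classical
  exact Nat.le_findGreatest (Q.supp c x h).2.1 h

theorem rel_decMax {x : ℕ} (h₁ : 1 ≤ x) (h₂ : x ≤ Q.n) : Q.rel (Q.decMax x) x := by
  classical
  exact Nat.findGreatest_spec (P := (Q.rel · x)) h₂ (Q.refl x h₁ h₂)

theorem rel_iff_le_decMax {c x : ℕ} (h₁ : 1 ≤ x) (h₂ : x ≤ Q.n) (hxc : x < c) :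
    Q.rel c x ↔ c ≤ Q.decMax x := by
  refine ⟨le_decMax_of_rel, fun hc => ?_⟩
  rcases hc.lt_or_eq with hc | rfl
  · exact Q.decCond x c _ (rel_decMax h₁ h₂) hxc hc
  · exact rel_decMax h₁ h₂

theorem decMax_le_decMax {x z : ℕ} (h₁ : 1 ≤ x) (h₂ : x ≤ Q.n) (hxz : x < z)
    (hz : z ≤ Q.decMax x) : Q.decMax z ≤ Q.decMax x :=
  le_decMax_of_rel (Q.trans _ _ _ (rel_decMax (by omega) (hz.trans (decMax_le x)))
    ((rel_iff_le_decMax h₁ h₂ hxz).2 hz))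

theorem exists_decRel_iff (Q : IntervalPoset) :
    ∃ T : BinTree, T.size = Q.n ∧ ∀ c a, decRel T c a ↔ a < c ∧ Q.rel c a := by
  obtain ⟨hsize, hmax⟩ := BinTree.ofSubtreeMax_spec (f := Q.decMax) (o := 0) (m := Q.n)
    (fun z hz₁ hz₂ => ⟨le_decMax hz₁ hz₂, decMax_le z⟩)
    (fun y z hy₁ hy₂ hyz hz => decMax_le_decMax hy₁ hy₂ hyz hz)
  refine ⟨_, by omega, fun c a => ?_⟩
  rw [decRel_iff]
  by_cases ha : 0 < a ∧ a ≤ Q.n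
  · rw [hmax a ha.1 ha.2]
    constructor
    · rintro ⟨hac, -, hc⟩
      exact ⟨hac, (rel_iff_le_decMax ha.1 ha.2 hac).2 hc⟩
    · rintro ⟨hac, hc⟩
      exact ⟨hac, ha.1, (rel_iff_le_decMax ha.1 ha.2 hac).1 hc⟩
  · rw [BinTree.subtreeMax_eq_self _ (o := 0) (y := a) (by omega)]
    constructor
    · omega
    · rintro ⟨-, hc⟩
      have := Q.supp c a hc
      omega

/-- Otherwise the common ancestor `m` of `a` and `c` in `B` would give `a ⊴ m` and `m ⊴ a`. -/
theorem decRel_of_incRel_le {B : BinTree} (hB : B.size = Q.n)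
    (hinc : ∀ a b, incRel B a b → Q.rel a b) {c a : ℕ} (h : Q.rel c a) (hac : a < c) :
    decRel B c a := by
  have := Q.supp c a h
  obtain ⟨m, ham, hmc, ha_m, hc_m⟩ :=
    BinTree.exists_common_ancestor (T := B) (o := 0) (x := a) (y := c) (by omega) hac.le (by omega)
  rcases ham.lt_or_eq with ham | rfl
  · have hm_a : Q.rel m a := by
      rcases hmc.lt_or_eq with hmc | rfl
      · exact Q.decCond a m c h ham hmc
      · exact h
    have := Q.antisymm a m (hinc a m ⟨ham, ha_m⟩) hm_a
    omega
  · exact ⟨hac, hc_m⟩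

end IntervalPoset

theorem tamariLE.pairRel_mono_left {T1 T2 T1' : BinTree} (h12 : tamariLE T1 T2)
    (h21' : tamariLE T2 T1') {n a b : ℕ} (h1' : T1'.size = n) (hab : pairRel n T1 T1' a b) :
    pairRel n T2 T1' a b := by
  have hle : tamariLE T1 T1' := Relation.ReflTransGen.trans h12 h21'
  rw [hle.pairRel_iff h1'] at hab
  rw [h21'.pairRel_iff h1']
  rcases hab with hrefl | hdec | hinc
  exacts [Or.inl hrefl, Or.inr (Or.inl (h12.decRel_le hdec)), Or.inr (Or.inr hinc)]

theorem tamariLE.lt_of_pairRel_of_not_pairRel {T1 T2 T1' : BinTree} (h12 : tamariLE T1 T2)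
    (h21' : tamariLE T2 T1') {n a b : ℕ} (h1' : T1'.size = n) (hab : pairRel n T2 T1' a b)
    (hnot : ¬ pairRel n T1 T1' a b) : b < a := by
  have hle : tamariLE T1 T1' := Relation.ReflTransGen.trans h12 h21'
  rw [h21'.pairRel_iff h1'] at hab
  rw [hle.pairRel_iff h1'] at hnot
  rcases hab with hrefl | hdec | hinc
  · exact absurd (Or.inl hrefl) hnot
  · exact hdec.1
  · exact absurd (Or.inr (Or.inr hinc)) hnot

/-- The lower endpoint is the tree whose final forest is the decreasing part of `Q`. -/
theorem exists_lower_of_pairRel_le {n : ℕ} {T1 T1' : BinTree} (h1 : T1.size = n)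
    (h1' : T1'.size = n) (hle : tamariLE T1 T1') {Q : IntervalPoset} (hQn : Q.n = n)
    (hPQ : ∀ a b, pairRel n T1 T1' a b → Q.rel a b)
    (hdecr : ∀ a b, Q.rel a b → ¬ pairRel n T1 T1' a b → b < a) :
    ∃ T2 : BinTree, T2.size = n ∧ tamariLE T1 T2 ∧ tamariLE T2 T1' ∧
      Q.rel = pairRel n T2 T1' := by
  obtain ⟨T2, hT2, hdec⟩ := Q.exists_decRel_iff
  have hinc : ∀ a b, incRel T1' a b → Q.rel a b := fun a b h =>
    hPQ a b ((hle.pairRel_iff h1').2 (Or.inr (Or.inr h)))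
  have h12 : tamariLE T1 T2 := (tamariLE_iff_decRel (by omega)).2 fun c a h =>
    (hdec c a).2 ⟨h.1, hPQ c a ((hle.pairRel_iff h1').2 (Or.inr (Or.inl h)))⟩
  have h21' : tamariLE T2 T1' := (tamariLE_iff_decRel (by omega)).2 fun c a h =>
    IntervalPoset.decRel_of_incRel_le (by omega) hinc ((hdec c a).1 h).2 ((hdec c a).1 h).1
  refine ⟨T2, by omega, h12, h21', ?_⟩
  ext a b
  rw [h21'.pairRel_iff h1']
  constructor
  · intro hab
    have := Q.supp a b hab
    rcases lt_trichotomy a b with hlt | rfl | hgt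
    · have hP : pairRel n T1 T1' a b := by
        by_contra hnot
        have := hdecr a b hab hnot
        omega
      rcases (hle.pairRel_iff h1').1 hP with hrefl | hdec' | hinc'
      · omega
      · exact absurd hdec'.1 (by omega)
      · exact Or.inr (Or.inr hinc')
    · exact Or.inl ⟨rfl, by omega, by omega⟩
    · exact Or.inr (Or.inl ((hdec a b).2 ⟨hgt, hab⟩))
  · rintro (⟨rfl, ha⟩ | hab | hab)
    · exact Q.refl a ha.1 (by omega)
    · exact ((hdec a b).1 hab).2
    · exact hinc a b hab

theorem exists_lower_pairRel_iff {n : ℕ} {T1 T1' : BinTree} (h1 : T1.size = n)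
    (h1' : T1'.size = n) (hle : tamariLE T1 T1') (Q : IntervalPoset) (hQn : Q.n = n) :
    (∃ T2 : BinTree, T2.size = n ∧ tamariLE T1 T2 ∧ tamariLE T2 T1' ∧
        Q.rel = pairRel n T2 T1') ↔
      ((∀ a b, pairRel n T1 T1' a b → Q.rel a b) ∧
        ∀ a b, Q.rel a b → ¬ pairRel n T1 T1' a b → b < a) := by
  refine ⟨fun ⟨T2, _, h12, h21', hQ⟩ => ?_,
    fun h => exists_lower_of_pairRel_le h1 h1' hle hQn h.1 h.2⟩
  rw [hQ]
  exact ⟨fun a b => h12.pairRel_mono_left h21' h1',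
    fun a b => h12.lt_of_pairRel_of_not_pairRel h21' h1'⟩

/-- Extended by the identity outside `{1, …, n}`, so that it is an involution of `ℕ`. -/
def reversal (n a : ℕ) : ℕ :=
  if 1 ≤ a ∧ a ≤ n then n + 1 - a else a

theorem reversal_involutive (n : ℕ) : Function.Involutive (reversal n) := by
  intro a
  unfold reversal
  split_ifs <;> omega

theorem reversal_of_mem {n a : ℕ} (h₁ : 1 ≤ a) (h₂ : a ≤ n) : reversal n a = n + 1 - a :=
  if_pos ⟨h₁, h₂⟩

theorem reversal_mem_iff {n a : ℕ} :
    (1 ≤ reversal n a ∧ reversal n a ≤ n) ↔ (1 ≤ a ∧ a ≤ n) := by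
  unfold reversal
  split_ifs <;> omega

theorem reversal_lt_reversal_iff {n a b : ℕ} (ha : 1 ≤ a ∧ a ≤ n)
    (hb : 1 ≤ b ∧ b ≤ n) :
    reversal n a < reversal n b ↔ b < a := by
  rw [reversal_of_mem ha.1 ha.2, reversal_of_mem hb.1 hb.2]
  omega

namespace BinTree

theorem sub_mirror_iff_reversal (T : BinTree) {a b : ℕ} :
    T.mirror.sub 0 a b ↔ T.sub 0 (reversal T.size a) (reversal T.size b) := by
  by_cases hab : (1 ≤ a ∧ a ≤ T.size) ∧ (1 ≤ b ∧ b ≤ T.size)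
  · rw [reversal_of_mem hab.1.1 hab.1.2, reversal_of_mem hab.2.1 hab.2.2]
    exact T.sub_mirror_iff (by omega) (by omega)
  · constructor <;> intro h <;> have := sub_bounds h
    · rw [size_mirror] at this
      omega
    · rw [← reversal_mem_iff, ← reversal_mem_iff (a := b)] at hab
      omega

end BinTree

theorem decRel_mirror_iff {A : BinTree} {a b : ℕ} :
    decRel A.mirror a b ↔ incRel A (reversal A.size a) (reversal A.size b) := by
  rw [decRel, incRel, A.sub_mirror_iff_reversal]
  refine and_congr_left fun h => ?_
  have := BinTree.sub_bounds h
  rw [reversal_lt_reversal_iff (reversal_mem_iff.1 (by omega)) (reversal_mem_iff.1 (by omega))]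

theorem incRel_mirror_iff {A : BinTree} {a b : ℕ} :
    incRel A.mirror a b ↔ decRel A (reversal A.size a) (reversal A.size b) := by
  rw [decRel, incRel, A.sub_mirror_iff_reversal]
  refine and_congr_left fun h => ?_
  have := BinTree.sub_bounds h
  rw [reversal_lt_reversal_iff (reversal_mem_iff.1 (by omega)) (reversal_mem_iff.1 (by omega))]

theorem tamariLE.pairRel_mirror_iff {A B : BinTree} (h : tamariLE A B) {n a b : ℕ}
    (hA : A.size = n) (hB : B.size = n) :
    pairRel n B.mirror A.mirror a b ↔ pairRel n A B (reversal n a) (reversal n b) := by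
  rw [h.mirror.pairRel_iff (by rw [BinTree.size_mirror, hA]), h.pairRel_iff hB,
    decRel_mirror_iff, incRel_mirror_iff, hA, hB, (reversal_involutive n).injective.eq_iff,
    reversal_mem_iff, or_comm (a := incRel B _ _)]

namespace IntervalPoset

def reverse (Q : IntervalPoset) : IntervalPoset where
  n := Q.n
  rel a b := Q.rel (reversal Q.n a) (reversal Q.n b)
  supp a b h := by
    have := Q.supp _ _ h
    have ha := reversal_mem_iff.1 ⟨this.1, this.2.1⟩
    have hb := reversal_mem_iff.1 ⟨this.2.2.1, this.2.2.2⟩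
    omega
  refl a h₁ h₂ := (reversal_mem_iff.2 ⟨h₁, h₂⟩).elim (Q.refl _)
  antisymm a b h h' := (reversal_involutive Q.n).injective (Q.antisymm _ _ h h')
  trans a b c := Q.trans _ _ _
  incCond a b c h hab hbc := by
    have := Q.supp _ _ h
    have ha := reversal_mem_iff.1 ⟨this.1, this.2.1⟩
    have hc := reversal_mem_iff.1 ⟨this.2.2.1, this.2.2.2⟩
    exact Q.decCond _ _ _ h ((reversal_lt_reversal_iff (by omega) (by omega)).2 hbc)
      ((reversal_lt_reversal_iff (by omega) (by omega)).2 hab)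
  decCond a b c h hab hbc := by
    have := Q.supp _ _ h
    have hc := reversal_mem_iff.1 ⟨this.1, this.2.1⟩
    have ha := reversal_mem_iff.1 ⟨this.2.2.1, this.2.2.2⟩
    exact Q.incCond _ _ _ h ((reversal_lt_reversal_iff (by omega) (by omega)).2 hbc)
      ((reversal_lt_reversal_iff (by omega) (by omega)).2 hab)

end IntervalPoset

theorem tamariLE.reverse_rel_eq_pairRel_iff {A B : BinTree} (h : tamariLE A B) {n : ℕ}
    (hA : A.size = n) (hB : B.size = n) {Q : IntervalPoset} (hQn : Q.n = n) :
    Q.reverse.rel = pairRel n B.mirror A.mirror ↔ Q.rel = pairRel n A B := by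
  have hσ := reversal_involutive n
  have hP : pairRel n B.mirror A.mirror = fun a b => pairRel n A B (reversal n a) (reversal n b) :=
    funext₂ fun a b => propext (h.pairRel_mirror_iff hA hB)
  rw [hP, show Q.reverse.rel = fun a b => Q.rel (reversal n a) (reversal n b) by
    rw [← hQn]; rfl]
  constructor
  · intro heq
    ext a b
    simpa only [hσ _] using Iff.of_eq (congrFun₂ heq (reversal n a) (reversal n b))
  · intro heq
    rw [heq]

theorem exists_upper_pairRel_iff {n : ℕ} {T1 T1' : BinTree} (h1 : T1.size = n)
    (h1' : T1'.size = n) (hle : tamariLE T1 T1') (Q : IntervalPoset) (hQn : Q.n = n) :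
    (∃ T3 : BinTree, T3.size = n ∧ tamariLE T1 T3 ∧ tamariLE T3 T1' ∧
        Q.rel = pairRel n T1 T3) ↔
      ((∀ a b, pairRel n T1 T1' a b → Q.rel a b) ∧
        ∀ a b, Q.rel a b → ¬ pairRel n T1 T1' a b → a < b) := by
  have hσ := reversal_involutive n
  have key := exists_lower_pairRel_iff (T1 := T1'.mirror) (T1' := T1.mirror)
    (by rw [BinTree.size_mirror, h1']) (by rw [BinTree.size_mirror, h1]) hle.mirror Q.reverse hQn
  rw [BinTree.mirror_involutive.surjective.exists] at key
  simp only [BinTree.size_mirror, tamariLE_mirror_iff, hle.pairRel_mirror_iff h1 h1'] at key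
  have hrev : ∀ a b, Q.reverse.rel a b ↔ Q.rel (reversal n a) (reversal n b) := by
    rw [← hQn]
    exact fun a b => Iff.rfl
  refine Iff.trans ?_ (key.trans ?_)
  · refine exists_congr fun T3 => ⟨?_, ?_⟩
    · rintro ⟨hs, h13, h31, hQ⟩
      exact ⟨hs, h31, h13, (h13.reverse_rel_eq_pairRel_iff h1 hs hQn).2 hQ⟩
    · rintro ⟨hs, h31, h13, hQ⟩
      exact ⟨hs, h13, h31, (h13.reverse_rel_eq_pairRel_iff h1 hs hQn).1 hQ⟩
  · simp only [hrev]
    refine and_congr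
      (hσ.surjective.forall₂ (p := fun a b => pairRel n T1 T1' a b → Q.rel a b)).symm
      ((forall₂_congr fun a b => imp_congr_right fun hq => imp_congr_right fun _ => ?_).trans
        (hσ.surjective.forall₂
          (p := fun a b => Q.rel a b → ¬ pairRel n T1 T1' a b → a < b)).symm)
    have := Q.supp _ _ hq
    rw [hQn] at this
    rw [reversal_lt_reversal_iff (reversal_mem_iff.1 (by omega)) (reversal_mem_iff.1 (by omega))]

/-- Raising the lower endpoint of a Tamari interval corresponds to adding only
decreasing relations to its interval-poset; lowering the upper endpoint to
adding only increasing relations. -/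
theorem stmt5 (n : ℕ) (T1 T1' : BinTree) (h1 : T1.size = n) (h1' : T1'.size = n)
    (hle : tamariLE T1 T1') (Q : IntervalPoset) (hQn : Q.n = n) :
    ((∃ T2 : BinTree, T2.size = n ∧ tamariLE T1 T2 ∧ tamariLE T2 T1' ∧
        Q.rel = pairRel n T2 T1') ↔
      ((∀ a b, pairRel n T1 T1' a b → Q.rel a b) ∧
        ∀ a b, Q.rel a b → ¬ pairRel n T1 T1' a b → b < a)) ∧
    ((∃ T3 : BinTree, T3.size = n ∧ tamariLE T1 T3 ∧ tamariLE T3 T1' ∧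
        Q.rel = pairRel n T1 T3) ↔
      ((∀ a b, pairRel n T1 T1' a b → Q.rel a b) ∧
        ∀ a b, Q.rel a b → ¬ pairRel n T1 T1' a b → a < b)) :=
  ⟨exists_lower_pairRel_iff h1 h1' hle Q hQn, exists_upper_pairRel_iff h1 h1' hle Q hQn⟩
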